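/- For each integer n ≥ 9, define h(x) = (n−6)²(n−3)(n²−7n+24)x⁸ − 2(n−6)²(n−2)(n²−n+6)x⁷ + (n−6)(n⁴+26n³−269n²+686n−516)x⁶ − 44(n−6)(n−3)(n−2)(n+2)x⁵ + (14n⁴+273n³−3034n²+5687n+1164)x⁴ − 2(n−2)(157n²−157n−2778)x³ + (49n³+1658n²−6539n+836)x² − 728(n−2)(n+5)x + 2704(n−1). Then h(0) > 0, h(2) > 0, and for n > 9, h(1) < 0; consequently for n > 9 the equation h(x)=0 has at least two roots in the open interval (0, 2), one in (0,1) and one in (1,2). -/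

import Mathlib

/-- The degree-8 polynomial `h(x)` with coefficients depending on the parameter `n`. -/
def hpoly (n x : ℝ) : ℝ :=
  (n - 6) ^ 2 * (n - 3) * (n ^ 2 - 7 * n + 24) * x ^ 8
    - 2 * (n - 6) ^ 2 * (n - 2) * (n ^ 2 - n + 6) * x ^ 7
    + (n - 6) * (n ^ 4 + 26 * n ^ 3 - 269 * n ^ 2 + 686 * n - 516) * x ^ 6
    - 44 * (n - 6) * (n - 3) * (n - 2) * (n + 2) * x ^ 5
    + (14 * n ^ 4 + 273 * n ^ 3 - 3034 * n ^ 2 + 5687 * n + 1164) * x ^ 4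
    - 2 * (n - 2) * (157 * n ^ 2 - 157 * n - 2778) * x ^ 3
    + (49 * n ^ 3 + 1658 * n ^ 2 - 6539 * n + 836) * x ^ 2
    - 728 * (n - 2) * (n + 5) * x
    + 2704 * (n - 1)

theorem continuous_hpoly (n : ℝ) : Continuous (hpoly n) := by
  unfold hpoly; fun_prop

theorem hpoly_zero (n : ℝ) : hpoly n 0 = 2704 * (n - 1) := by
  unfold hpoly; ring

theorem hpoly_one (n : ℝ) : hpoly n 1 = -2 * n ^ 2 * (n - 1) * (n - 9) := by
  unfold hpoly; ring

theorem hpoly_two (n : ℝ) :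
    hpoly n 2 = 64 * (n - 9) ^ 5 + 1184 * (n - 9) ^ 4 + 9284 * (n - 9) ^ 3
      + 39924 * (n - 9) ^ 2 + 96416 * (n - 9) + 104336 := by
  unfold hpoly; ring

theorem hpoly_zero_pos {n : ℝ} (hn : 1 < n) : 0 < hpoly n 0 := by
  rw [hpoly_zero]; linarith

theorem hpoly_one_neg {n : ℝ} (hn : 9 < n) : hpoly n 1 < 0 := by
  rw [hpoly_one]
  have : 0 < n ^ 2 * (n - 1) * (n - 9) := by
    have : 0 < n - 1 := by linarith
    have : 0 < n - 9 := by linarith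
    positivity
  linarith

theorem hpoly_two_pos {n : ℝ} (hn : 9 ≤ n) : 0 < hpoly n 2 := by
  rw [hpoly_two]
  have : 0 ≤ n - 9 := by linarith
  positivity

theorem hpoly_signs_and_roots (n : ℤ) (hn : 9 ≤ n) :
    0 < hpoly (n : ℝ) 0 ∧ 0 < hpoly (n : ℝ) 2 ∧
    (9 < n → hpoly (n : ℝ) 1 < 0) ∧
    (9 < n → (∃ x : ℝ, 0 < x ∧ x < 1 ∧ hpoly (n : ℝ) x = 0) ∧
      (∃ y : ℝ, 1 < y ∧ y < 2 ∧ hpoly (n : ℝ) y = 0)) := by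
  have hn' : (9 : ℝ) ≤ n := by exact_mod_cast hn
  have h0 := hpoly_zero_pos (n := n) (by linarith)
  have h2 := hpoly_two_pos hn'
  have h1 : 9 < n → hpoly (n : ℝ) 1 < 0 := fun h ↦ hpoly_one_neg (by exact_mod_cast h)
  refine ⟨h0, h2, h1, fun h ↦ ⟨?_, ?_⟩⟩
  · obtain ⟨x, ⟨hx0, hx1⟩, hx⟩ := intermediate_value_Ioo' zero_le_one
      (continuous_hpoly n).continuousOn ⟨h1 h, h0⟩
    exact ⟨x, hx0, hx1, hx⟩
  · obtain ⟨y, ⟨hy1, hy2⟩, hy⟩ := intermediate_value_Ioo one_le_two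
      (continuous_hpoly n).continuousOn ⟨h1 h, h2⟩
    exact ⟨y, hy1, hy2, hy⟩
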